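/- arXiv:2306.00324 — 3 statements merged into one kernel-verified Lean document; each statement's English description precedes it below -/
import Mathlib

section
/- Let S, A be nonempty finite sets, let K, H be positive integers, and let W ≥ 0 be a real number. Let q : {1,...,K} × {1,...,H} × S × A → [0,1] and n : {1,...,K} × {1,...,H} × S × A → ℝ be functions such that for all k, h, s, a: n(k,h,s,a) > (1/2) · ∑_{j=1}^{k−1} q(j,h,s,a) − W. For each k, h define L_{k,h} = {(s,a) ∈ S × A : (1/4) · ∑_{j=1}^{k−1} q(j,h,s,a) ≥ W + 1}. Then ∑_{k=1}^{K} ∑_{h=1}^{H} ∑_{(s,a) ∈ L_{k,h}} q(k,h,s,a) / n(k,h,s,a) ≤ 4 · |S| · |A| · H · ln(4 + K). -/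
/-!
Fix `h` and `(s, a)` and let `X_k = ∑_{j<k} q(j)` be the cumulative occupancy. When
`(s, a) ∈ L_{k,h}`, the count hypothesis gives `n_k > X_k / 4 + 1 ≥ (X_{k+1} + 3) / 4`, so
`q_k / n_k ≤ 4 q_k / (3 + X_{k+1}) ≤ 4 (log (3 + X_{k+1}) - log (3 + X_k))`. These increments
telescope to `4 log (3 + X_K) ≤ 4 log (4 + K)`, and there are `H·|S|·|A|` choices of `h, s, a`.
-/

open Finset Real

lemma div_add_le_log_add_sub_log {b v : ℝ} (hb : 0 < b) (hv : 0 ≤ v) :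
    v / (b + v) ≤ log (b + v) - log b := by
  have hbv : 0 < b + v := by linarith
  calc v / (b + v) = 1 - ((b + v) / b)⁻¹ := by field_simp; ring
    _ ≤ log ((b + v) / b) := one_sub_inv_le_log_of_pos (div_pos hbv hb)
    _ = log (b + v) - log b := log_div hbv.ne' hb.ne'

lemma sum_div_add_partialSum_le_log {c : ℝ} (hc : 0 < c) {x : ℕ → ℝ} {K : ℕ}
    (hx : ∀ k < K, 0 ≤ x k) :
    ∑ k ∈ range K, x k / (c + ∑ j ∈ range (k + 1), x j) ≤
      log (c + ∑ j ∈ range K, x j) - log c := by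
  have hpartial : ∀ k ≤ K, 0 ≤ ∑ j ∈ range k, x j := fun k hk =>
    sum_nonneg fun j hj => hx j (by simp at hj; omega)
  calc ∑ k ∈ range K, x k / (c + ∑ j ∈ range (k + 1), x j)
      ≤ ∑ k ∈ range K,
          (log (c + ∑ j ∈ range (k + 1), x j) - log (c + ∑ j ∈ range k, x j)) := by
        refine sum_le_sum fun k hk => ?_
        have hk : k < K := mem_range.mp hk
        rw [sum_range_succ, ← add_assoc]
        exact div_add_le_log_add_sub_log (by linarith [hpartial k hk.le]) (hx k hk)
    _ = log (c + ∑ j ∈ range K, x j) - log c := by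
        rw [sum_range_sub (fun k => log (c + ∑ j ∈ range k, x j))]
        simp

lemma sum_ite_div_count_le_log {x m : ℕ → ℝ} {K : ℕ} {W : ℝ}
    (hx : ∀ k < K, 0 ≤ x k ∧ x k ≤ 1)
    (hm : ∀ k < K, (1 / 2 : ℝ) * (∑ j ∈ range k, x j) - W < m k) :
    ∑ k ∈ range K, (if W + 1 ≤ (1 / 4 : ℝ) * ∑ j ∈ range k, x j then x k / m k else 0) ≤
      4 * log (4 + K) := by
  have hterm : ∀ k < K,
      (if W + 1 ≤ (1 / 4 : ℝ) * ∑ j ∈ range k, x j then x k / m k else 0) ≤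
        4 * (x k / (3 + ∑ j ∈ range (k + 1), x j)) := by
    intro k hk
    obtain ⟨hx0, hx1⟩ := hx k hk
    have hpartial : 0 ≤ ∑ j ∈ range k, x j :=
      sum_nonneg fun j hj => (hx j (by simp at hj; omega)).1
    rw [sum_range_succ]
    split_ifs with hL
    · have hm' := hm k hk
      calc x k / m k ≤ x k / ((3 + (∑ j ∈ range k, x j + x k)) / 4) :=
            div_le_div_of_nonneg_left hx0 (by positivity) (by linarith)
        _ = 4 * (x k / (3 + (∑ j ∈ range k, x j + x k))) := by
              rw [div_div_eq_mul_div]; ring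
    · positivity
  calc ∑ k ∈ range K, (if W + 1 ≤ (1 / 4 : ℝ) * ∑ j ∈ range k, x j then x k / m k else 0)
      ≤ 4 * ∑ k ∈ range K, x k / (3 + ∑ j ∈ range (k + 1), x j) := by
        rw [mul_sum]
        exact sum_le_sum fun k hk => hterm k (mem_range.mp hk)
    _ ≤ 4 * (log (3 + ∑ j ∈ range K, x j) - log 3) := by
        gcongr
        exact sum_div_add_partialSum_le_log (by norm_num) fun k hk => (hx k hk).1
    _ ≤ 4 * log (4 + K) := by
        have hpartial_le : ∑ j ∈ range K, x j ≤ K := by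
          simpa using sum_le_sum fun j hj => (hx j (mem_range.mp hj)).2
        have hpos : 0 < 3 + ∑ j ∈ range K, x j := by
          linarith [sum_nonneg fun j hj => (hx j (mem_range.mp hj)).1]
        have : log (3 + ∑ j ∈ range K, x j) ≤ log (4 + K) :=
          log_le_log hpos (by linarith)
        have : 0 ≤ log 3 := log_nonneg (by norm_num)
        linarith

theorem stmt_14_general (S A : Type*) [Fintype S] [Fintype A]
    (K H : ℕ) (W : ℝ)
    (q n : ℕ → ℕ → S → A → ℝ)
    (hq : ∀ k < K, ∀ h < H, ∀ s a, 0 ≤ q k h s a ∧ q k h s a ≤ 1)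
    (hn : ∀ k < K, ∀ h < H, ∀ s a,
      n k h s a > (1 / 2 : ℝ) * (∑ j ∈ Finset.range k, q j h s a) - W) :
    ∑ k ∈ Finset.range K, ∑ h ∈ Finset.range H,
      ∑ p ∈ Finset.univ.filter
        (fun p : S × A => W + 1 ≤ (1 / 4 : ℝ) * ∑ j ∈ Finset.range k, q j h p.1 p.2),
        q k h p.1 p.2 / n k h p.1 p.2 ≤
      4 * (Fintype.card S : ℝ) * (Fintype.card A : ℝ) * (H : ℝ) * Real.log (4 + K) := by
  simp_rw [sum_filter]
  calc _ = ∑ h ∈ range H, ∑ p : S × A, ∑ k ∈ range K,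
          (if W + 1 ≤ (1 / 4 : ℝ) * ∑ j ∈ range k, q j h p.1 p.2
            then q k h p.1 p.2 / n k h p.1 p.2 else 0) := by
        rw [sum_comm]
        exact sum_congr rfl fun h _ => sum_comm
    _ ≤ ∑ h ∈ range H, ∑ _p : S × A, 4 * log (4 + K) :=
        sum_le_sum fun h hh => sum_le_sum fun p _ =>
          sum_ite_div_count_le_log (fun k hk => hq k hk h (mem_range.mp hh) p.1 p.2)
            (fun k hk => hn k hk h (mem_range.mp hh) p.1 p.2)
    _ = 4 * (Fintype.card S : ℝ) * (Fintype.card A : ℝ) * (H : ℝ) * Real.log (4 + K) := by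
        simp only [sum_const, card_range, card_univ, Fintype.card_prod, nsmul_eq_mul]
        push_cast
        ring

/-- Per-pair occupancy-over-count bound restricted to pairs in `L_{k,h}`:
if the visit counts satisfy `n(k,h,s,a) > (1/2)·∑_{j<k} q(j,h,s,a) − W`, then
`∑_k ∑_h ∑_{(s,a) ∈ L_{k,h}} q(k,h,s,a)/n(k,h,s,a) ≤ 4·S·A·H·ln(4+K)`. -/
theorem stmt_14 (S A : Type*) [Fintype S] [Nonempty S] [Fintype A] [Nonempty A]
    (K H : ℕ) (hK : 0 < K) (hH : 0 < H) (W : ℝ) (hW : 0 ≤ W)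
    (q n : ℕ → ℕ → S → A → ℝ)
    (hq : ∀ k < K, ∀ h < H, ∀ s a, 0 ≤ q k h s a ∧ q k h s a ≤ 1)
    (hn : ∀ k < K, ∀ h < H, ∀ s a,
      n k h s a > (1 / 2 : ℝ) * (∑ j ∈ Finset.range k, q j h s a) - W) :
    ∑ k ∈ Finset.range K, ∑ h ∈ Finset.range H,
      ∑ p ∈ Finset.univ.filter
        (fun p : S × A => W + 1 ≤ (1 / 4 : ℝ) * ∑ j ∈ Finset.range k, q j h p.1 p.2),
        q k h p.1 p.2 / n k h p.1 p.2 ≤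
      4 * (Fintype.card S : ℝ) * (Fintype.card A : ℝ) * (H : ℝ) * Real.log (4 + K) :=
  stmt_14_general S A K H W q n hq hn
end

section
/- Let S, A be nonempty finite sets, let K, H be positive integers, and let W ≥ 0 be a real number. Let q : {1,...,K} × {1,...,H} × S × A → [0,1] satisfy ∑_{(s,a) ∈ S×A} q(k,h,s,a) = 1 for every k and h, and let n : {1,...,K} × {1,...,H} × S × A → ℝ satisfy, for all k, h, s, a: n(k,h,s,a) > (1/2) · ∑_{j=1}^{k−1} q(j,h,s,a) − W. Then ∑_{k=1}^{K} ∑_{h=1}^{H} ∑_{(s,a)} q(k,h,s,a) / √(max{n(k,h,s,a), 1}) ≤ 2H · √(|S| · |A| · K · ln(4 + K)) + |S| · |A| · H · (4W + 5). -/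
/-!
Fix a step `h` and a pair `(s, a)`, and let `Q k = ∑_{j<k} q j` be the partial sums. While
`Q k ≤ 4W + 4` the terms satisfy `q k / √n ≤ q k`, and they add up to at most `4W + 5`. Afterwards
the count hypothesis gives `n k ≥ Q (k+1) / 4`, so by Cauchy–Schwarz the remaining terms sum to at
most `√(Q K) · √(∑ 4 q k / Q (k+1))`, and `q k / Q (k+1) ≤ log Q (k+1) - log Q k` telescopes to
`log (4 + K)`. Summing over `(s, a)` with Cauchy–Schwarz once more, using `∑_{s,a} Q K = K`, and
then over `h` gives the bound.
-/

open Finset Real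

lemma sub_div_le_log_sub_log {x y : ℝ} (hx : 0 < x) (hxy : x ≤ y) :
    (y - x) / y ≤ log y - log x := by
  have hy : 0 < y := hx.trans_le hxy
  have h := log_le_sub_one_of_pos (div_pos hx hy)
  rw [log_div hx.ne' hy.ne'] at h
  have : x / y - 1 = -((y - x) / y) := by field_simp; ring
  linarith

lemma sum_filter_partialSum_le_le_min {r : ℕ → ℝ} {K : ℕ} {c : ℝ}
    (hr0 : ∀ k < K, 0 ≤ r k) (hr1 : ∀ k < K, r k ≤ 1) (hc : 0 ≤ c) :
    ∑ k ∈ range K with ∑ j ∈ range k, r j ≤ c, r k ≤ min (∑ j ∈ range K, r j) (c + 1) := by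
  induction K with
  | zero => simpa using hc.trans (le_add_of_nonneg_right zero_le_one)
  | succ K ih =>
    obtain ⟨ih_partial, ih_const⟩ :=
      le_min_iff.mp (ih (fun k hk => hr0 k (by omega)) (fun k hk => hr1 k (by omega)))
    have := hr0 K K.lt_add_one
    have := hr1 K K.lt_add_one
    rw [sum_range_succ, range_add_one, filter_insert]
    split_ifs with hK
    · rw [sum_insert (by simp)]
      exact le_min (by linarith) (by linarith)
    · exact le_min (by linarith) (by linarith)

lemma sum_filter_div_le_four_mul_log {r m : ℕ → ℝ} {K : ℕ} {W : ℝ} (hW : 0 ≤ W)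
    (hr0 : ∀ k < K, 0 ≤ r k) (hr1 : ∀ k < K, r k ≤ 1)
    (hm : ∀ k < K, (1 / 2 : ℝ) * ∑ j ∈ range k, r j - W < m k) :
    ∑ k ∈ range K with 4 * W + 4 < ∑ j ∈ range k, r j, r k / m k ≤ 4 * log (4 + K) := by
  set Q : ℕ → ℝ := fun k => ∑ j ∈ range k, r j with hQ
  have hQsucc (k : ℕ) : Q (k + 1) = Q k + r k := sum_range_succ r k
  -- `R` agrees with `Q` on the late indices and makes the telescoping sum start at `log 4`.
  set R : ℕ → ℝ := fun k => max (Q k) 4 with hR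
  have hterm : ∀ k ∈ range K,
      (if 4 * W + 4 < Q k then r k / m k else 0) ≤ 4 * (log (R (k + 1)) - log (R k)) := by
    intro k hk
    have hk := mem_range.mp hk
    have hrk := hr0 k hk
    split_ifs with hlate
    · have hQk : 4 ≤ Q k := by linarith
      have hmk : Q (k + 1) / 4 ≤ m k := by
        have := hm k hk; have := hr1 k hk; rw [hQsucc]; linarith
      have hQk1 : 4 ≤ Q (k + 1) := by rw [hQsucc]; linarith
      calc r k / m k ≤ r k / (Q (k + 1) / 4) :=
            div_le_div_of_nonneg_left hrk (by linarith) hmk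
        _ = 4 * ((Q (k + 1) - Q k) / Q (k + 1)) := by rw [hQsucc]; field_simp; ring
        _ ≤ 4 * (log (Q (k + 1)) - log (Q k)) := by
            gcongr; exact sub_div_le_log_sub_log (by linarith) (by rw [hQsucc]; linarith)
        _ = 4 * (log (R (k + 1)) - log (R k)) := by
            simp only [hR, max_eq_left hQk, max_eq_left hQk1]
    · have : R k ≤ R (k + 1) := max_le_max (by rw [hQsucc]; linarith) le_rfl
      have := log_le_log (by positivity) this
      linarith
  have hRK : R K ≤ 4 + K := by
    have : Q K ≤ K := by
      simpa using sum_le_sum fun j hj => hr1 j (mem_range.mp hj)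
    exact max_le (by linarith) (by linarith [K.cast_nonneg (α := ℝ)])
  calc ∑ k ∈ range K with 4 * W + 4 < Q k, r k / m k
      = ∑ k ∈ range K, if 4 * W + 4 < Q k then r k / m k else 0 := sum_filter _ _
    _ ≤ ∑ k ∈ range K, 4 * (log (R (k + 1)) - log (R k)) := sum_le_sum hterm
    _ = 4 * (log (R K) - log 4) := by
        rw [← mul_sum, sum_range_sub (fun k => log (R k))]; simp [hR, hQ]
    _ ≤ 4 * log (4 + K) := by
        have := log_le_log (by positivity) hRK
        have := log_nonneg (show (1 : ℝ) ≤ 4 by norm_num)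
        linarith

lemma sum_div_sqrt_le_of_partialSum_lt {r m : ℕ → ℝ} {K : ℕ} {W : ℝ} (hW : 0 ≤ W)
    (hr0 : ∀ k < K, 0 ≤ r k) (hr1 : ∀ k < K, r k ≤ 1) (hm1 : ∀ k < K, 1 ≤ m k)
    (hm : ∀ k < K, (1 / 2 : ℝ) * ∑ j ∈ range k, r j - W < m k) :
    ∑ k ∈ range K, r k / √(m k) ≤
      2 * √(∑ j ∈ range K, r j) * √(log (4 + K)) + (4 * W + 5) := by
  set Q : ℕ → ℝ := fun k => ∑ j ∈ range k, r j
  have hlate : ∑ k ∈ range K with 4 * W + 4 < Q k, r k / √(m k) ≤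
      2 * √(Q K) * √(log (4 + K)) := by
    have hnonneg : ∀ k ∈ {k ∈ range K | 4 * W + 4 < Q k}, 0 ≤ r k ∧ 0 ≤ r k / m k := by
      intro k hk
      have hk := mem_range.mp (mem_filter.mp hk).1
      exact ⟨hr0 k hk, div_nonneg (hr0 k hk) (zero_le_one.trans (hm1 k hk))⟩
    have hsplit : ∀ k ∈ {k ∈ range K | 4 * W + 4 < Q k},
        r k / √(m k) = √(r k) * √(r k / m k) := by
      intro k hk
      have hrk := (hnonneg k hk).1
      rw [← sqrt_mul hrk, ← mul_div_assoc, ← pow_two, sqrt_div (by positivity), sqrt_sq hrk]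
    have hsq_r : ∑ k ∈ range K with 4 * W + 4 < Q k, √(r k) ^ 2 ≤ Q K := by
      rw [sum_congr rfl fun k hk => sq_sqrt (hnonneg k hk).1]
      exact sum_le_sum_of_subset_of_nonneg (filter_subset _ _)
        fun k hk _ => hr0 k (mem_range.mp hk)
    have hsq_u : ∑ k ∈ range K with 4 * W + 4 < Q k, √(r k / m k) ^ 2 ≤ 4 * log (4 + K) := by
      rw [sum_congr rfl fun k hk => sq_sqrt (hnonneg k hk).2]
      exact sum_filter_div_le_four_mul_log hW hr0 hr1 hm
    calc ∑ k ∈ range K with 4 * W + 4 < Q k, r k / √(m k)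
        = ∑ k ∈ range K with 4 * W + 4 < Q k, √(r k) * √(r k / m k) := sum_congr rfl hsplit
      _ ≤ √(∑ k ∈ range K with 4 * W + 4 < Q k, √(r k) ^ 2) *
            √(∑ k ∈ range K with 4 * W + 4 < Q k, √(r k / m k) ^ 2) :=
          sum_mul_le_sqrt_mul_sqrt _ _ _
      _ ≤ √(Q K) * √(4 * log (4 + K)) :=
          mul_le_mul (sqrt_le_sqrt hsq_r) (sqrt_le_sqrt hsq_u) (sqrt_nonneg _) (sqrt_nonneg _)
      _ = 2 * √(Q K) * √(log (4 + K)) := by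
          rw [sqrt_mul zero_le_four, show (4 : ℝ) = 2 ^ 2 by norm_num, sqrt_sq zero_le_two]; ring
  have hearly : ∑ k ∈ range K with ¬4 * W + 4 < Q k, r k / √(m k) ≤ 4 * W + 5 := by
    calc ∑ k ∈ range K with ¬4 * W + 4 < Q k, r k / √(m k)
        ≤ ∑ k ∈ range K with Q k ≤ 4 * W + 4, r k := by
          simp_rw [not_lt]
          exact sum_le_sum fun k hk => by
            have hk := mem_range.mp (mem_filter.mp hk).1
            exact div_le_self (hr0 k hk) (one_le_sqrt.mpr (hm1 k hk))
      _ ≤ 4 * W + 4 + 1 :=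
          (sum_filter_partialSum_le_le_min hr0 hr1 (by linarith)).trans (min_le_right _ _)
      _ = 4 * W + 5 := by ring
  rw [← sum_filter_add_sum_filter_not _ (fun k => 4 * W + 4 < Q k)]
  exact add_le_add hlate hearly

lemma sum_sum_div_sqrt_le_of_partialSum_lt {ι : Type*} [Fintype ι] {r m : ℕ → ι → ℝ} {K : ℕ}
    {W : ℝ} (hW : 0 ≤ W) (hr : ∀ k < K, ∀ i, 0 ≤ r k i ∧ r k i ≤ 1)
    (hsum : ∀ k < K, ∑ i, r k i = 1)
    (hm : ∀ k < K, ∀ i, (1 / 2 : ℝ) * ∑ j ∈ range k, r j i - W < m k i) :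
    ∑ k ∈ range K, ∑ i, r k i / √(max (m k i) 1) ≤
      2 * √(Fintype.card ι * K * log (4 + K)) + Fintype.card ι * (4 * W + 5) := by
  have hQ_nonneg (i : ι) : 0 ≤ ∑ j ∈ range K, r j i :=
    sum_nonneg fun j hj => (hr j (mem_range.mp hj) i).1
  have hQ_total : ∑ i, ∑ j ∈ range K, r j i = K := by
    rw [sum_comm, sum_congr rfl fun j hj => hsum j (mem_range.mp hj)]
    simp
  have hsqrt_sum : ∑ i, √(∑ j ∈ range K, r j i) ≤ √(Fintype.card ι) * √K := by
    simpa [hQ_total] using sum_sqrt_mul_sqrt_le univ (fun _ => zero_le_one) hQ_nonneg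
  calc ∑ k ∈ range K, ∑ i, r k i / √(max (m k i) 1)
      = ∑ i, ∑ k ∈ range K, r k i / √(max (m k i) 1) := sum_comm
    _ ≤ ∑ i, (2 * √(∑ j ∈ range K, r j i) * √(log (4 + K)) + (4 * W + 5)) :=
        sum_le_sum fun i _ => sum_div_sqrt_le_of_partialSum_lt hW
          (fun k hk => (hr k hk i).1) (fun k hk => (hr k hk i).2)
          (fun k _ => le_max_right _ _) (fun k hk => (hm k hk i).trans_le (le_max_left _ _))
    _ = 2 * √(log (4 + K)) * ∑ i, √(∑ j ∈ range K, r j i) + Fintype.card ι * (4 * W + 5) := by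
        rw [sum_add_distrib, mul_sum, sum_const, card_univ, nsmul_eq_mul]
        congr 1
        exact sum_congr rfl fun i _ => by ring
    _ ≤ 2 * √(log (4 + K)) * (√(Fintype.card ι) * √K) + Fintype.card ι * (4 * W + 5) := by
        gcongr
    _ = 2 * √(Fintype.card ι * K * log (4 + K)) + Fintype.card ι * (4 * W + 5) := by
        rw [sqrt_mul (by positivity), sqrt_mul (by positivity)]; ring

theorem stmt_15_general (S A : Type*) [Fintype S] [Fintype A]
    (K H : ℕ) (W : ℝ) (hW : 0 ≤ W)
    (q n : ℕ → ℕ → S → A → ℝ)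
    (hq : ∀ k < K, ∀ h < H, ∀ s a, 0 ≤ q k h s a ∧ q k h s a ≤ 1)
    (hsum : ∀ k < K, ∀ h < H, ∑ s : S, ∑ a : A, q k h s a = 1)
    (hn : ∀ k < K, ∀ h < H, ∀ s a,
      n k h s a > (1 / 2 : ℝ) * (∑ j ∈ Finset.range k, q j h s a) - W) :
    ∑ k ∈ Finset.range K, ∑ h ∈ Finset.range H, ∑ s : S, ∑ a : A,
      q k h s a / Real.sqrt (max (n k h s a) 1) ≤
      2 * (H : ℝ) *
        Real.sqrt ((Fintype.card S : ℝ) * (Fintype.card A : ℝ) * (K : ℝ) *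
          Real.log (4 + K)) +
      (Fintype.card S : ℝ) * (Fintype.card A : ℝ) * (H : ℝ) * (4 * W + 5) := by
  have hstep : ∀ h ∈ range H, ∑ k ∈ range K, ∑ p : S × A, q k h p.1 p.2 / √(max (n k h p.1 p.2) 1)
      ≤ 2 * √(Fintype.card (S × A) * K * log (4 + K)) + Fintype.card (S × A) * (4 * W + 5) :=
    fun h hh => sum_sum_div_sqrt_le_of_partialSum_lt hW
      (fun k hk p => hq k hk h (mem_range.mp hh) p.1 p.2)
      (fun k hk => by rw [Fintype.sum_prod_type]; exact hsum k hk h (mem_range.mp hh))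
      (fun k hk p => hn k hk h (mem_range.mp hh) p.1 p.2)
  rw [sum_comm]
  simp only [← Fintype.sum_prod_type']
  refine (sum_le_sum hstep).trans_eq ?_
  simp only [sum_const, card_range, Fintype.card_prod, nsmul_eq_mul]
  push_cast
  ring

/-- Occupancy-over-square-root-count bound: if each `q(k,h,·,·)` is a probability
distribution over state–action pairs and the visit counts satisfy
`n(k,h,s,a) > (1/2)·∑_{j<k} q(j,h,s,a) − W`, then
`∑_k ∑_h ∑_{s,a} q(k,h,s,a)/√(max{n(k,h,s,a),1}) ≤ 2H·√(S·A·K·ln(4+K)) + S·A·H·(4W+5)`. -/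
theorem stmt_15 (S A : Type*) [Fintype S] [Nonempty S] [Fintype A] [Nonempty A]
    (K H : ℕ) (hK : 0 < K) (hH : 0 < H) (W : ℝ) (hW : 0 ≤ W)
    (q n : ℕ → ℕ → S → A → ℝ)
    (hq : ∀ k < K, ∀ h < H, ∀ s a, 0 ≤ q k h s a ∧ q k h s a ≤ 1)
    (hsum : ∀ k < K, ∀ h < H, ∑ s : S, ∑ a : A, q k h s a = 1)
    (hn : ∀ k < K, ∀ h < H, ∀ s a,
      n k h s a > (1 / 2 : ℝ) * (∑ j ∈ Finset.range k, q j h s a) - W) :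
    ∑ k ∈ Finset.range K, ∑ h ∈ Finset.range H, ∑ s : S, ∑ a : A,
      q k h s a / Real.sqrt (max (n k h s a) 1) ≤
      2 * (H : ℝ) *
        Real.sqrt ((Fintype.card S : ℝ) * (Fintype.card A : ℝ) * (K : ℝ) *
          Real.log (4 + K)) +
      (Fintype.card S : ℝ) * (Fintype.card A : ℝ) * (H : ℝ) * (4 * W + 5) :=
  stmt_15_general S A K H W hW q n hq hsum hn
end

section
/- Let S, A be nonempty finite sets, let K, H be positive integers, and let W ≥ 0 be a real number. Let q : {1,...,K} × {1,...,H} × S × A → [0,1] and n : {1,...,K} × {1,...,H} × S × A → ℝ satisfy, for all k, h, s, a: n(k,h,s,a) > (1/2) · ∑_{j=1}^{k−1} q(j,h,s,a) − W. Then ∑_{k=1}^{K} ∑_{h=1}^{H} ∑_{(s,a)} q(k,h,s,a) / max{n(k,h,s,a), 1} ≤ |S| · |A| · H · (4 · ln(4 + K) + 4W + 5). -/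
/-!
Fix `(h, s, a)` and write `Q k = ∑_{j<k} q j`. The hypothesis bounds `max (n k) 1` below by
`L k = max (Q k / 2 - W) 1`. The terms with `Q k ≤ 2 + 2W` sum to at most `3 + 2W`, since `Q` is
monotone with increments at most `1`. Afterwards `L (k+1) = L k + q k / 2` with `q k ≤ L k`, so
`q k / L k ≤ 3 (log L (k+1) - log L k)`, which telescopes to `3 log L K ≤ 3 log (4 + K)`.
-/

open Finset Real

lemma two_mul_div_le_three_mul_log_add_sub_log {L x : ℝ} (hL : 0 < L) (hx : 0 ≤ x)
    (hxL : 2 * x ≤ L) : 2 * x / L ≤ 3 * (log (L + x) - log L) := by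
  have hLx : 0 < L + x := by linarith
  have h := one_sub_inv_le_log_of_pos (div_pos hLx hL)
  rw [log_div hLx.ne' hL.ne', inv_div, one_sub_div hLx.ne', add_sub_cancel_left] at h
  have : 2 * x / L ≤ 3 * (x / (L + x)) := by
    rw [← mul_div_assoc, div_le_div_iff₀ hL hLx]
    nlinarith
  linarith

lemma sum_filter_partialSum_le_le (f : ℕ → ℝ) {c : ℝ} (hc : 0 ≤ c) (K : ℕ)
    (hf : ∀ k < K, 0 ≤ f k ∧ f k ≤ 1) :
    ∑ k ∈ range K with ∑ j ∈ range k, f j ≤ c, f k ≤ c + 1 := by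
  induction K with
  | zero => simp only [range_zero, filter_empty, sum_empty]; linarith
  | succ K ih =>
    rw [range_add_one, filter_insert]
    split_ifs with hK
    · calc ∑ k ∈ insert K {k ∈ range K | ∑ j ∈ range k, f j ≤ c}, f k
          ≤ ∑ k ∈ range (K + 1), f k :=
            sum_le_sum_of_subset_of_nonneg
              (by rw [range_add_one]; exact insert_subset_insert K (filter_subset _ _))
              fun k hk _ => (hf k (mem_range.1 hk)).1
        _ ≤ c + 1 := by rw [sum_range_succ]; linarith [(hf K K.lt_succ_self).2]
    · exact ih fun k hk => hf k (by omega)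

noncomputable def countLowerBound (f : ℕ → ℝ) (W : ℝ) (k : ℕ) : ℝ :=
  max ((1 / 2) * ∑ j ∈ range k, f j - W) 1

section countLowerBound

variable {f : ℕ → ℝ} {W : ℝ}

lemma one_le_countLowerBound (k : ℕ) : 1 ≤ countLowerBound f W k := le_max_right _ _

lemma countLowerBound_pos (k : ℕ) : 0 < countLowerBound f W k :=
  one_pos.trans_le (one_le_countLowerBound k)

lemma countLowerBound_zero (hW : 0 ≤ W) : countLowerBound f W 0 = 1 := by
  simp only [countLowerBound, range_zero, sum_empty]
  exact max_eq_right (by linarith)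

lemma countLowerBound_le_succ {k : ℕ} (hf : 0 ≤ f k) :
    countLowerBound f W k ≤ countLowerBound f W (k + 1) := by
  refine max_le_max ?_ le_rfl
  rw [sum_range_succ]
  linarith

lemma countLowerBound_succ {k : ℕ} (hf : 0 ≤ f k) (hk : 2 + 2 * W ≤ ∑ j ∈ range k, f j) :
    countLowerBound f W (k + 1) = countLowerBound f W k + f k / 2 := by
  have hk' : 2 + 2 * W ≤ ∑ j ∈ range (k + 1), f j := by rw [sum_range_succ]; linarith
  unfold countLowerBound
  rw [max_eq_left (by linarith), max_eq_left (by linarith), sum_range_succ]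
  ring

lemma countLowerBound_le (hW : 0 ≤ W) (K : ℕ) (hf : ∀ k < K, f k ≤ 1) :
    countLowerBound f W K ≤ 4 + K := by
  have : ∑ j ∈ range K, f j ≤ K := by
    simpa using sum_le_sum fun j hj => hf j (mem_range.1 hj)
  exact max_le (by linarith) (by linarith [K.cast_nonneg (α := ℝ)])

lemma div_countLowerBound_le {k : ℕ} (hf : 0 ≤ f k ∧ f k ≤ 1) :
    f k / countLowerBound f W k ≤
      (if ∑ j ∈ range k, f j ≤ 2 + 2 * W then f k else 0) +
        3 * (log (countLowerBound f W (k + 1)) - log (countLowerBound f W k)) := by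
  split_ifs with hk
  · have hlog : 0 ≤ log (countLowerBound f W (k + 1)) - log (countLowerBound f W k) :=
      sub_nonneg.2 (log_le_log (countLowerBound_pos k) (countLowerBound_le_succ hf.1))
    have : f k / countLowerBound f W k ≤ f k := div_le_self hf.1 (one_le_countLowerBound k)
    linarith
  · rw [countLowerBound_succ hf.1 (not_le.1 hk).le, zero_add]
    have := two_mul_div_le_three_mul_log_add_sub_log (countLowerBound_pos (f := f) (W := W) k)
      (div_nonneg hf.1 two_pos.le) (by linarith [one_le_countLowerBound (f := f) (W := W) k])
    rwa [mul_div_cancel₀ _ two_ne_zero] at this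

end countLowerBound

theorem sum_div_max_one_le (K : ℕ) {W : ℝ} (hW : 0 ≤ W) (f N : ℕ → ℝ)
    (hf : ∀ k < K, 0 ≤ f k ∧ f k ≤ 1)
    (hN : ∀ k < K, N k > (1 / 2) * (∑ j ∈ range k, f j) - W) :
    ∑ k ∈ range K, f k / max (N k) 1 ≤ 4 * log (4 + K) + 4 * W + 5 := by
  set L := countLowerBound f W
  have hlogK : log (L K) ≤ log (4 + K) :=
    log_le_log (countLowerBound_pos K) (countLowerBound_le hW K fun k hk => (hf k hk).2)
  have hlog4K : 0 ≤ log (4 + K) := log_nonneg (by linarith [K.cast_nonneg (α := ℝ)])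
  calc ∑ k ∈ range K, f k / max (N k) 1
      ≤ ∑ k ∈ range K, f k / L k := sum_le_sum fun k hk =>
        div_le_div_of_nonneg_left (hf k (mem_range.1 hk)).1 (countLowerBound_pos k)
          (max_le_max (hN k (mem_range.1 hk)).le le_rfl)
    _ ≤ ∑ k ∈ range K, ((if ∑ j ∈ range k, f j ≤ 2 + 2 * W then f k else 0) +
          3 * (log (L (k + 1)) - log (L k))) :=
        sum_le_sum fun k hk => div_countLowerBound_le (hf k (mem_range.1 hk))
    _ = ∑ k ∈ range K with ∑ j ∈ range k, f j ≤ 2 + 2 * W, f k + 3 * log (L K) := by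
        rw [sum_add_distrib, ← sum_filter, ← mul_sum, sum_range_sub (fun k => log (L k)),
          show L 0 = 1 from countLowerBound_zero hW, log_one, sub_zero]
    _ ≤ (2 + 2 * W + 1) + 3 * log (4 + K) := by
        gcongr
        exact sum_filter_partialSum_le_le f (by linarith) K hf
    _ ≤ 4 * log (4 + K) + 4 * W + 5 := by linarith

theorem stmt_16_general (S A : Type*) [Fintype S] [Fintype A]
    (K H : ℕ) (W : ℝ) (hW : 0 ≤ W)
    (q n : ℕ → ℕ → S → A → ℝ)
    (hq : ∀ k < K, ∀ h < H, ∀ s a, 0 ≤ q k h s a ∧ q k h s a ≤ 1)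
    (hn : ∀ k < K, ∀ h < H, ∀ s a,
      n k h s a > (1 / 2 : ℝ) * (∑ j ∈ Finset.range k, q j h s a) - W) :
    ∑ k ∈ Finset.range K, ∑ h ∈ Finset.range H, ∑ s : S, ∑ a : A,
      q k h s a / max (n k h s a) 1 ≤
      (Fintype.card S : ℝ) * (Fintype.card A : ℝ) * (H : ℝ) *
        (4 * Real.log (4 + K) + 4 * W + 5) := by
  set B := 4 * log (4 + K) + 4 * W + 5
  have hswap : ∑ k ∈ range K, ∑ h ∈ range H, ∑ s : S, ∑ a : A, q k h s a / max (n k h s a) 1 =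
      ∑ h ∈ range H, ∑ s : S, ∑ a : A, ∑ k ∈ range K, q k h s a / max (n k h s a) 1 := by
    rw [sum_comm]
    refine sum_congr rfl fun h _ => ?_
    rw [sum_comm]
    exact sum_congr rfl fun s _ => sum_comm
  calc _ = _ := hswap
    _ ≤ ∑ _h ∈ range H, ∑ _s : S, ∑ _a : A, B :=
        sum_le_sum fun h hh => sum_le_sum fun s _ => sum_le_sum fun a _ =>
          sum_div_max_one_le K hW (fun k => q k h s a) (fun k => n k h s a)
            (fun k hk => hq k hk h (mem_range.1 hh) s a) (fun k hk => hn k hk h (mem_range.1 hh) s a)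
    _ = _ := by simp only [sum_const, card_range, card_univ, nsmul_eq_mul]; ring

/-- Occupancy-over-count bound: if the visit counts satisfy
`n(k,h,s,a) > (1/2)·∑_{j<k} q(j,h,s,a) − W`, then
`∑_k ∑_h ∑_{s,a} q(k,h,s,a)/max{n(k,h,s,a),1} ≤ S·A·H·(4·ln(4+K) + 4W + 5)`. -/
theorem stmt_16 (S A : Type*) [Fintype S] [Nonempty S] [Fintype A] [Nonempty A]
    (K H : ℕ) (hK : 0 < K) (hH : 0 < H) (W : ℝ) (hW : 0 ≤ W)
    (q n : ℕ → ℕ → S → A → ℝ)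
    (hq : ∀ k < K, ∀ h < H, ∀ s a, 0 ≤ q k h s a ∧ q k h s a ≤ 1)
    (hn : ∀ k < K, ∀ h < H, ∀ s a,
      n k h s a > (1 / 2 : ℝ) * (∑ j ∈ Finset.range k, q j h s a) - W) :
    ∑ k ∈ Finset.range K, ∑ h ∈ Finset.range H, ∑ s : S, ∑ a : A,
      q k h s a / max (n k h s a) 1 ≤
      (Fintype.card S : ℝ) * (Fintype.card A : ℝ) * (H : ℝ) *
        (4 * Real.log (4 + K) + 4 * W + 5) :=
  stmt_16_general S A K H W hW q n hq hn
end
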